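/- For every Lebesgue-null set N ⊂ ℝ there exists a 1-Lipschitz function φ : ℝ → ℝ with |φ'(t)| = 1 at almost every t ∈ ℝ, such that φ is not differentiable at any point of N. -/

import Mathlib

/-!
Since `N` is null, inside any open `U ⊇ N` there is an open `V ⊇ N` which, around every point
`x ∈ N`, fills only an `ε`-fraction of some ball of radius `h ≤ ε` contained in `U`: group the
points of `N` by the size `2⁻ᵏ` of the balls around them that fit into `U`, and cover the `k`-th
group by an open set of measure `≈ ε² 4⁻ᵏ` kept within `2⁻ᵏ⁻²` of it. Iterating gives open sets
`U 0 ⊇ U 1 ⊇ ⋯ ⊇ N` with `ε n → 0`. For `E = ⋃ m, U (2m) \ U (2m + 1)` the ball of step `n` around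
`x ∈ N` is almost filled by `E` when `n` is even and almost free of `E` when `n` is odd, so the
difference quotients of `φ t = ∫₀ᵗ (2·1_E − 1)` at `x` approach both `1` and `-1`. On the other
hand `φ` is `1`-Lipschitz, and `φ' = ±1` almost everywhere by the Lebesgue differentiation theorem.
-/

open MeasureTheory Set Metric Filter Topology

lemma measure_iUnion_le_of_le_geometric {Ω : Type*} [MeasurableSpace Ω] {μ : Measure Ω}
    {A : ℕ → Set Ω} {c : ℝ} (hc : 0 ≤ c)
    (hA : ∀ j, μ (A j) ≤ ENNReal.ofReal (c / 2 * (1 / 2) ^ j)) :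
    μ (⋃ j, A j) ≤ ENNReal.ofReal c := by
  calc μ (⋃ j, A j) ≤ ∑' j, μ (A j) := measure_iUnion_le _
    _ ≤ ∑' j, ENNReal.ofReal (c / 2 * (1 / 2) ^ j) := ENNReal.tsum_le_tsum hA
    _ = ENNReal.ofReal c := by
      rw [← ENNReal.ofReal_tsum_of_nonneg (fun j => by positivity)
        (summable_geometric_two.mul_left _), tsum_mul_left, tsum_geometric_two]
      ring_nf

section ThinAt

variable {X : Type*} [PseudoMetricSpace X]

lemma ball_subset_of_mem_thickening {S U : Set X} {r : ℝ} {x y : X}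
    (hS : ∀ z ∈ S, ball z (4 * r) ⊆ U) (hy : y ∈ thickening r S) (hyx : dist y x < r) :
    ball x (2 * r) ⊆ U := by
  obtain ⟨z, hz, hyz⟩ := mem_thickening_iff.1 hy
  refine (ball_subset_ball' ?_).trans (hS z hz)
  linarith [dist_triangle x y z, dist_comm x y]

variable [MeasurableSpace X]

def ThinAt (μ : Measure X) (ε : ℝ) (x : X) (U V : Set X) : Prop :=
  ∃ h ∈ Ioc 0 ε, ball x h ⊆ U ∧ μ (V ∩ ball x h) ≤ ENNReal.ofReal (ε * h)

lemma thinAt_iUnion_inter_thickening {μ : Measure X} {U : Set X} {S O : ℕ → Set X} {ε : ℝ}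
    (hε : 0 < ε) (hε1 : ε ≤ 1) (hSU : ∀ k, ∀ z ∈ S k, ball z ((1 / 2) ^ k) ⊆ U)
    (hμO : ∀ k, μ (O k) ≤ ENNReal.ofReal (ε ^ 2 * (1 / 2) ^ (2 * k + 4)))
    {x : X} {k : ℕ} (hk : x ∈ S k) (hmin : ∀ j < k, ¬ ball x ((1 / 2) ^ j) ⊆ U) :
    ThinAt μ ε x U (⋃ j, O j ∩ thickening ((1 / 2) ^ (j + 2)) (S j)) := by
  set h := ε * (1 / 2) ^ (k + 2)
  have hh_le : ∀ i ≤ k + 2, h ≤ (1 / 2) ^ i := fun i hi =>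
    (mul_le_of_le_one_left (by positivity) hε1).trans
      (pow_le_pow_of_le_one (by norm_num) (by norm_num) hi)
  refine ⟨h, ⟨by positivity, mul_le_of_le_one_right hε.le (pow_le_one₀ (by norm_num)
    (by norm_num))⟩, (ball_subset_ball (hh_le k (by omega))).trans (hSU k x hk), ?_⟩
  rw [iUnion_inter]
  refine measure_iUnion_le_of_le_geometric (by positivity) fun j => ?_
  rcases lt_or_ge (j + 1) k with hjk | hjk
  · -- a point of the `j`-th piece near `x` would give `x` the scale `j + 1 < k`
    suffices O j ∩ thickening ((1 / 2) ^ (j + 2)) (S j) ∩ ball x h = ∅ by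
      rw [this, measure_empty]
      exact zero_le
    refine eq_empty_of_forall_notMem fun y ⟨hyW, hyx⟩ => hmin (j + 1) hjk ?_
    have hSU' : ∀ z ∈ S j, ball z (4 * (1 / 2) ^ (j + 2)) ⊆ U := fun z hz => by
      convert hSU j z hz using 2; ring
    convert ball_subset_of_mem_thickening hSU' hyW.2
      ((mem_ball.1 hyx).trans_le (hh_le (j + 2) (by omega))) using 2
    ring
  · refine (measure_mono (inter_subset_left.trans inter_subset_left)).trans <|
      (hμO j).trans (ENNReal.ofReal_le_ofReal ?_)
    calc ε ^ 2 * (1 / 2) ^ (2 * j + 4) ≤ ε ^ 2 * (1 / 2) ^ (k + 3 + j) :=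
          mul_le_mul_of_nonneg_left
            (pow_le_pow_of_le_one (by norm_num) (by norm_num) (by omega)) (by positivity)
      _ = ε * h / 2 * (1 / 2) ^ j := by ring

lemma exists_isOpen_thinAt (μ : Measure X) [μ.OuterRegular] {N U : Set X} (hN : μ N = 0)
    (hU : IsOpen U) (hNU : N ⊆ U) {ε : ℝ} (hε : 0 < ε) (hε1 : ε ≤ 1) :
    ∃ V, IsOpen V ∧ N ⊆ V ∧ V ⊆ U ∧ ∀ x ∈ N, ThinAt μ ε x U V := by
  classical
  set S : ℕ → Set X := fun k => {x ∈ N | ball x ((1 / 2) ^ k) ⊆ U}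
  have hS : ∀ k, ∃ O ⊇ S k, IsOpen O ∧ μ O < ENNReal.ofReal (ε ^ 2 * (1 / 2) ^ (2 * k + 4)) :=
    fun k => (S k).exists_isOpen_lt_of_lt _ <| (measure_mono_null (sep_subset _ _) hN).trans_lt
      (by simp only [ENNReal.ofReal_pos]; positivity)
  choose O hSO hO hμO using hS
  have hscale : ∀ x ∈ N, ∃ k, x ∈ S k := fun x hx => by
    obtain ⟨r, hr, hrU⟩ := Metric.isOpen_iff.1 hU x (hNU hx)
    obtain ⟨k, hk⟩ := exists_pow_lt_of_lt_one hr (by norm_num : (1 / 2 : ℝ) < 1)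
    exact ⟨k, hx, (ball_subset_ball hk.le).trans hrU⟩
  refine ⟨⋃ k, O k ∩ thickening ((1 / 2) ^ (k + 2)) (S k),
    isOpen_iUnion fun k => (hO k).inter isOpen_thickening, fun x hx => ?_,
    iUnion_subset fun k y hy => ?_, fun x hx => ?_⟩
  · obtain ⟨k, hk⟩ := hscale x hx
    exact mem_iUnion.2 ⟨k, hSO k hk, self_subset_thickening (by positivity) _ hk⟩
  · refine ball_subset_of_mem_thickening (fun z hz => ?_) hy.2
      (by simp only [dist_self]; positivity) (mem_ball_self (by positivity))
    convert hz.2 using 2; ring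
  · exact thinAt_iUnion_inter_thickening hε hε1 (fun k z hz => hz.2) (fun k => (hμO k).le)
      (Nat.find_spec (hscale x hx)) fun j hj hxj => Nat.find_min (hscale x hx) hj ⟨hx, hxj⟩

lemma exists_antitone_thinAt (μ : Measure X) [μ.OuterRegular] {N : Set X} (hN : μ N = 0)
    {ε : ℕ → ℝ} (hε : ∀ n, 0 < ε n) (hε1 : ∀ n, ε n ≤ 1) :
    ∃ U : ℕ → Set X, (∀ n, IsOpen (U n)) ∧ Antitone U ∧
      ∀ n, ∀ x ∈ N, ThinAt μ (ε n) x (U n) (U (n + 1)) := by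
  classical
  have hstep : ∀ n (U : Set X), ∃ V, IsOpen U ∧ N ⊆ U →
      IsOpen V ∧ N ⊆ V ∧ V ⊆ U ∧ ∀ x ∈ N, ThinAt μ (ε n) x U V := fun n U =>
    if hU : IsOpen U ∧ N ⊆ U then
      (exists_isOpen_thinAt μ hN hU.1 hU.2 (hε n) (hε1 n)).imp fun _ hV _ => hV
    else ⟨∅, fun h => absurd h hU⟩
  choose next hnext using hstep
  let U : ℕ → Set X := fun n => Nat.rec univ next n
  have hU : ∀ n, IsOpen (U n) ∧ N ⊆ U n := fun n => by
    induction n with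
    | zero => exact ⟨isOpen_univ, subset_univ N⟩
    | succ n ih => exact ⟨(hnext n _ ih).1, (hnext n _ ih).2.1⟩
  exact ⟨U, fun n => (hU n).1, antitone_nat_of_succ_le fun n => (hnext n _ (hU n)).2.2.1,
    fun n => (hnext n _ (hU n)).2.2.2⟩

end ThinAt

section Alternating

variable {α : Type*} {U : ℕ → Set α}

lemma diff_iUnion_diff_subset {S : Set α} {m : ℕ} (hS : S ⊆ U (2 * m)) :
    S \ ⋃ i, U (2 * i) \ U (2 * i + 1) ⊆ U (2 * m + 1) := fun y hy => by
  by_contra h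
  exact hy.2 (mem_iUnion.2 ⟨m, hS hy.1, h⟩)

lemma iUnion_diff_inter_subset (hU : Antitone U) {S : Set α} {m : ℕ} (hS : S ⊆ U (2 * m + 1)) :
    (⋃ i, U (2 * i) \ U (2 * i + 1)) ∩ S ⊆ U (2 * m + 2) := by
  rintro y ⟨hyE, hyS⟩
  obtain ⟨i, hyi, hyi'⟩ := mem_iUnion.1 hyE
  rcases le_or_gt i m with him | him
  · exact absurd (hU (by omega) (hS hyS)) hyi'
  · exact hU (by omega) hyi

lemma measurableSet_iUnion_diff {β : Type*} [TopologicalSpace β] [MeasurableSpace β]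
    [OpensMeasurableSpace β] {V : ℕ → Set β} (hV : ∀ n, IsOpen (V n)) :
    MeasurableSet (⋃ m, V (2 * m) \ V (2 * m + 1)) :=
  MeasurableSet.iUnion fun _ => (hV _).measurableSet.diff (hV _).measurableSet

end Alternating

lemma not_differentiableAt_of_frequently {f : ℝ → ℝ} {x a b : ℝ} (hab : a < b) {h : ℕ → ℝ}
    (hpos : ∀ n, 0 < h n) (hlim : Tendsto h atTop (𝓝 0))
    (hup : ∃ᶠ n in atTop, b * h n ≤ f (x + h n) - f x)
    (hlow : ∃ᶠ n in atTop, f (x + h n) - f x ≤ a * h n) : ¬ DifferentiableAt ℝ f x := by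
  intro hf
  have hslope : Tendsto (fun n => slope f x (x + h n)) atTop (𝓝 (deriv f x)) := by
    refine (hasDerivAt_iff_tendsto_slope.1 hf.hasDerivAt).comp (tendsto_nhdsWithin_iff.2 ⟨?_, ?_⟩)
    · simpa using tendsto_const_nhds.add hlim
    · exact Eventually.of_forall fun n => by simp [(hpos n).ne']
  have hslope_eq : ∀ n, slope f x (x + h n) = (f (x + h n) - f x) / h n := fun n => by
    rw [slope_def_field, add_sub_cancel_left]
  have hb : b ≤ deriv f x := isClosed_Ici.mem_of_frequently_of_tendsto
    (hup.mono fun n hn => by rwa [mem_Ici, hslope_eq, le_div_iff₀ (hpos n)]) hslope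
  have ha : deriv f x ≤ a := isClosed_Iic.mem_of_frequently_of_tendsto
    (hlow.mono fun n hn => by rwa [mem_Iic, hslope_eq, div_le_iff₀ (hpos n)]) hslope
  linarith

noncomputable def signIndicator (E : Set ℝ) (s : ℝ) : ℝ := 2 * E.indicator 1 s - 1

noncomputable def phi (E : Set ℝ) (t : ℝ) : ℝ := ∫ s in 0..t, signIndicator E s

section Phi

variable {E : Set ℝ}

lemma norm_signIndicator (s : ℝ) : ‖signIndicator E s‖ = 1 := by
  by_cases hs : s ∈ E <;> norm_num [signIndicator, hs]

variable (hE : MeasurableSet E)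
include hE

lemma locallyIntegrable_signIndicator :
    LocallyIntegrable (signIndicator E) volume := by
  have hsign : signIndicator E = E.indicator (fun _ => 2) - fun _ => 1 := by
    funext s
    by_cases hs : s ∈ E <;> simp [signIndicator, hs]
  rw [hsign]
  exact ((locallyIntegrable_const 2).indicator hE).sub (locallyIntegrable_const 1)

lemma phi_sub_phi (x y : ℝ) : phi E y - phi E x = ∫ s in x..y, signIndicator E s :=
  have hint (a b : ℝ) : IntervalIntegrable (signIndicator E) volume a b :=
    ((locallyIntegrable_signIndicator hE).integrableOn_isCompact
      isCompact_uIcc).intervalIntegrable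
  intervalIntegral.integral_interval_sub_left (hint 0 y) (hint 0 x)

lemma lipschitzWith_phi : LipschitzWith 1 (phi E) :=
  LipschitzWith.of_dist_le_mul fun y x => by
    rw [Real.dist_eq, Real.dist_eq, phi_sub_phi hE, NNReal.coe_one, ← Real.norm_eq_abs]
    exact intervalIntegral.norm_integral_le_of_norm_le_const fun s _ =>
      (norm_signIndicator s).le

lemma ae_hasDerivAt_phi : ∀ᵐ t, HasDerivAt (phi E) (signIndicator E t) t := by
  filter_upwards [LocallyIntegrable.ae_hasDerivAt_integral (locallyIntegrable_signIndicator hE)]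
    with t ht
  exact ht 0

lemma phi_add_sub_phi (x : ℝ) {h : ℝ} (hh : 0 ≤ h) :
    phi E (x + h) - phi E x = 2 * volume.real (E ∩ Ioc x (x + h)) - h := by
  rw [phi_sub_phi hE, intervalIntegral.integral_of_le (by linarith)]
  unfold signIndicator
  rw [integral_sub (((integrable_const 1).indicator hE).const_mul 2) (integrable_const 1),
    integral_const_mul, integral_indicator_one hE, measureReal_restrict_apply hE,
    setIntegral_const, Real.volume_real_Ioc_of_le (by linarith), smul_eq_mul, mul_one]
  ring

lemma le_phi_add_sub_phi (x : ℝ) {h c : ℝ} (hh : 0 ≤ h) (hc : 0 ≤ c)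
    (hμ : volume (Ioc x (x + h) \ E) ≤ ENNReal.ofReal (c * h)) :
    (1 - 2 * c) * h ≤ phi E (x + h) - phi E x := by
  have hdiff : volume.real (Ioc x (x + h) \ E) ≤ c * h :=
    ENNReal.toReal_le_of_le_ofReal (by positivity) hμ
  have hsplit := measureReal_inter_add_sdiff (s := Ioc x (x + h)) hE
    (measure_Ioc_lt_top (μ := volume)).ne
  rw [Real.volume_real_Ioc_of_le (by linarith), inter_comm] at hsplit
  rw [phi_add_sub_phi hE x hh]
  linarith

lemma phi_add_sub_phi_le (x : ℝ) {h c : ℝ} (hh : 0 ≤ h) (hc : 0 ≤ c)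
    (hμ : volume (E ∩ Ioc x (x + h)) ≤ ENNReal.ofReal (c * h)) :
    phi E (x + h) - phi E x ≤ (2 * c - 1) * h := by
  have hinter : volume.real (E ∩ Ioc x (x + h)) ≤ c * h :=
    ENNReal.toReal_le_of_le_ofReal (by positivity) hμ
  rw [phi_add_sub_phi hE x hh]
  linarith

end Phi

lemma not_differentiableAt_phi_iUnion_diff {U : ℕ → Set ℝ} (hUo : ∀ n, IsOpen (U n))
    (hU : Antitone U) {ε : ℕ → ℝ} (hε0 : Tendsto ε atTop (𝓝 0)) (hε : ∀ n, ε n ≤ 1 / 8)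
    {x : ℝ} (hx : ∀ n, ThinAt volume (ε n) x (U n) (U (n + 1))) :
    ¬ DifferentiableAt ℝ (phi (⋃ m, U (2 * m) \ U (2 * m + 1))) x := by
  have hE := measurableSet_iUnion_diff hUo
  choose h hh hball hμ using hx
  have hIoc : ∀ n, Ioc x (x + h n / 2) ⊆ ball x (h n) := fun n => by
    rw [Real.ball_eq_Ioo]
    exact Ioc_subset_Ioo (by linarith [(hh n).1]) (by linarith [(hh n).1])
  -- increments are taken over `Ioc x (x + h n / 2) ⊆ ball x (h n)`, which doubles the density bound
  have hμ' : ∀ n, ∀ S ⊆ U (n + 1) ∩ ball x (h n),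
      volume S ≤ ENNReal.ofReal (2 * ε n * (h n / 2)) := fun n S hS =>
    (measure_mono hS).trans ((hμ n).trans_eq (by ring_nf))
  have hε_nonneg : ∀ n, 0 ≤ 2 * ε n := fun n => by linarith [(hh n).1.trans_le (hh n).2]
  refine not_differentiableAt_of_frequently (a := -1 / 2) (b := 1 / 2) (by norm_num)
    (fun n => half_pos (hh n).1) ?_ ?_ ?_
  · exact squeeze_zero (fun n => (half_pos (hh n).1).le)
      (fun n => (half_le_self (hh n).1.le).trans (hh n).2) hε0
  · refine frequently_atTop.2 fun n => ⟨2 * n, by omega, ?_⟩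
    have := le_phi_add_sub_phi hE x (half_pos (hh (2 * n)).1).le (hε_nonneg (2 * n)) <|
      hμ' (2 * n) _ fun y hy =>
        ⟨diff_iUnion_diff_subset ((hIoc (2 * n)).trans (hball (2 * n))) hy, hIoc (2 * n) hy.1⟩
    nlinarith [hε (2 * n), half_pos (hh (2 * n)).1]
  · refine frequently_atTop.2 fun n => ⟨2 * n + 1, by omega, ?_⟩
    have := phi_add_sub_phi_le hE x (half_pos (hh (2 * n + 1)).1).le (hε_nonneg (2 * n + 1)) <|
      hμ' (2 * n + 1) _ fun y hy =>
        ⟨iUnion_diff_inter_subset hU ((hIoc (2 * n + 1)).trans (hball (2 * n + 1))) hy,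
          hIoc (2 * n + 1) hy.2⟩
    nlinarith [hε (2 * n + 1), half_pos (hh (2 * n + 1)).1]

theorem stmt_19 (N : Set ℝ) (hN : volume N = 0) :
    ∃ φ : ℝ → ℝ, LipschitzWith 1 φ ∧
      (∀ᵐ t ∂(volume : Measure ℝ), DifferentiableAt ℝ φ t ∧ |deriv φ t| = 1) ∧
      ∀ t ∈ N, ¬ DifferentiableAt ℝ φ t := by
  obtain ⟨U, hUo, hU, hthin⟩ := exists_antitone_thinAt volume hN
    (ε := fun n => (1 / 2) ^ (n + 3)) (fun n => by positivity)
    (fun n => pow_le_one₀ (by norm_num) (by norm_num))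
  have hE := measurableSet_iUnion_diff hUo
  refine ⟨_, lipschitzWith_phi hE, ?_, fun x hx => not_differentiableAt_phi_iUnion_diff hUo hU
    ?_ (fun n => ?_) fun n => hthin n x hx⟩
  · filter_upwards [ae_hasDerivAt_phi hE] with t ht
    exact ⟨ht.differentiableAt, by rw [ht.deriv, ← Real.norm_eq_abs, norm_signIndicator]⟩
  · exact (tendsto_pow_atTop_nhds_zero_of_lt_one (by norm_num) (by norm_num)).comp
      (tendsto_add_atTop_nat 3)
  · calc (1 / 2 : ℝ) ^ (n + 3) ≤ (1 / 2) ^ 3 :=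
          pow_le_pow_of_le_one (by norm_num) (by norm_num) (by omega)
      _ = 1 / 8 := by norm_num
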